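/- arXiv:1306.4695 — 3 statements merged into one kernel-verified Lean document; each statement's English description precedes it below -/
import Mathlib

section
/- Let f ∈ ℂ[x₁,…,xₙ] be a nonconstant squarefree polynomial. Then there exists a vector v = (v₁,…,vₙ) ∈ ℂⁿ such that f and the directional derivative D_v f = Σᵢ vᵢ ∂f/∂xᵢ have no common nonconstant factor (i.e., they are coprime in ℂ[x₁,…,xₙ]). -/
/-!
For a prime factor `p` of `f`, the directions `v` with `p ∣ D_v f` form a subspace. It is proper:
writing `f = p * g` with `p ∤ g`, if `p` divided every `∂ᵢ f` it would divide every `∂ᵢ p`, which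
has smaller total degree, so all `∂ᵢ p` would vanish and `p` would be constant (characteristic
zero). A vector space over an infinite field is not a finite union of proper subspaces, so some
`v` avoids the subspaces of all prime factors of `f`.
-/

open MvPolynomial

namespace MvPolynomial

variable {σ R : Type*}

theorem totalDegree_pderiv_lt [CommSemiring R] {p : MvPolynomial σ R} {i : σ}
    (h : pderiv i p ≠ 0) : (pderiv i p).totalDegree < p.totalDegree := by
  obtain ⟨m, hm, hdeg⟩ := Finset.exists_mem_eq_sup _ (support_nonempty.mpr h)
    fun s => s.sum fun _ e => e
  have hmi : m + Finsupp.single i 1 ∈ p.support := by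
    rw [mem_support_iff, coeff_pderiv] at hm
    exact mem_support_iff.mpr (left_ne_zero_of_mul hm)
  calc (pderiv i p).totalDegree = m.degree := hdeg
    _ < (m + Finsupp.single i 1).degree := by simp
    _ ≤ p.totalDegree := le_totalDegree hmi

theorem pderiv_eq_zero_of_dvd_pderiv [CommRing R] [IsDomain R] {p : MvPolynomial σ R} {i : σ}
    (h : p ∣ pderiv i p) : pderiv i p = 0 := by
  by_contra h0
  exact (totalDegree_le_of_dvd_of_isDomain h h0).not_gt (totalDegree_pderiv_lt h0)

theorem totalDegree_eq_zero_of_forall_pderiv_eq_zero [CommSemiring R] [NoZeroDivisors R]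
    [CharZero R] {p : MvPolynomial σ R} (h : ∀ i, pderiv i p = 0) : p.totalDegree = 0 := by
  rw [totalDegree_eq_zero_iff]
  intro m hm i
  by_contra hmi
  have hsplit : m - Finsupp.single i 1 + Finsupp.single i 1 = m :=
    tsub_add_cancel_of_le (Finsupp.single_le_iff.mpr (Nat.one_le_iff_ne_zero.mpr hmi))
  have hcoeff := coeff_pderiv (i := i) p (m - Finsupp.single i 1)
  rw [h i, hsplit, coeff_zero, eq_comm, mul_eq_zero] at hcoeff
  exact hcoeff.elim (mem_support_iff.mp hm) (Nat.cast_add_one_ne_zero _)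

variable {K : Type*} [Field K]

theorem exists_pderiv_ne_zero_of_prime [CharZero K] {p : MvPolynomial σ K} (hp : Prime p) :
    ∃ i, pderiv i p ≠ 0 := by
  by_contra! h
  have hC := totalDegree_eq_zero_iff_eq_C.mp (totalDegree_eq_zero_of_forall_pderiv_eq_zero h)
  have hc : coeff 0 p ≠ 0 := fun h0 => hp.ne_zero (by rw [hC, h0, C_0])
  exact hp.not_isUnit (hC ▸ (isUnit_iff_ne_zero.mpr hc).map C)

theorem exists_not_dvd_pderiv_of_prime_dvd [CharZero K] {f p : MvPolynomial σ K}
    (hf : Squarefree f) (hp : Prime p) (hpf : p ∣ f) : ∃ i, ¬p ∣ pderiv i f := by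
  obtain ⟨g, rfl⟩ := hpf
  have hpg : ¬p ∣ g := fun ⟨h, hh⟩ => hp.not_isUnit (hf p ⟨h, by rw [hh, mul_assoc]⟩)
  obtain ⟨i, hi⟩ := exists_pderiv_ne_zero_of_prime hp
  refine ⟨i, fun hdvd => hi (pderiv_eq_zero_of_dvd_pderiv ?_)⟩
  rw [pderiv_mul, dvd_add_left (dvd_mul_right _ _)] at hdvd
  exact (hp.dvd_or_dvd hdvd).resolve_right hpg

section DirectionalDeriv

variable [Fintype σ]

noncomputable def directionalDeriv (f : MvPolynomial σ K) : (σ → K) →ₗ[K] MvPolynomial σ K :=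
  Fintype.linearCombination K fun i => pderiv i f

theorem directionalDeriv_apply (f : MvPolynomial σ K) (v : σ → K) :
    directionalDeriv f v = ∑ i, C (v i) * pderiv i f := by
  simp only [directionalDeriv, Fintype.linearCombination_apply, smul_eq_C_mul]

theorem directionalDeriv_single [DecidableEq σ] (f : MvPolynomial σ K) (i : σ) :
    directionalDeriv f (Pi.single i 1) = pderiv i f := by
  rw [directionalDeriv, Fintype.linearCombination_apply_single, one_smul]

open UniqueFactorizationMonoid in
theorem exists_direction_forall_prime_dvd_not_dvd [CharZero K] {f : MvPolynomial σ K}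
    (hf : Squarefree f) : ∃ v, ∀ p, Prime p → p ∣ f → ¬p ∣ directionalDeriv f v := by
  classical
  let W (p : MvPolynomial σ K) : Submodule K (σ → K) :=
    ((Ideal.span {p}).restrictScalars K).comap (directionalDeriv f)
  have mem_W (p v) : v ∈ W p ↔ p ∣ directionalDeriv f v := by
    simp [W, Ideal.mem_span_singleton]
  have top_notMem : ⊤ ∉ (factors f).toFinset.image W := by
    simp only [Finset.mem_image, Multiset.mem_toFinset, not_exists, not_and]
    intro p hp htop
    obtain ⟨i, hi⟩ :=
      exists_not_dvd_pderiv_of_prime_dvd hf (prime_of_factor p hp) (dvd_of_mem_factors hp)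
    rw [← directionalDeriv_single, ← mem_W, htop] at hi
    exact hi Submodule.mem_top
  obtain ⟨v, hv⟩ :=
    (Set.ne_univ_iff_exists_notMem _).mp (Subspace.biUnion_ne_univ_of_top_notMem top_notMem)
  refine ⟨v, fun p hp hpf hpD => hv ?_⟩
  obtain ⟨q, hq, hpq⟩ := exists_mem_factors_of_dvd hf.ne_zero hp.irreducible hpf
  exact Set.mem_biUnion (Finset.mem_image_of_mem W (Multiset.mem_toFinset.mpr hq))
    ((mem_W q v).mpr (hpq.symm.dvd.trans hpD))

end DirectionalDeriv

end MvPolynomial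

theorem exists_direction_coprime_directional_derivative_general
    (n : ℕ) (f : MvPolynomial (Fin n) ℂ)
    (hf_sqfree : Squarefree f) :
    ∃ v : Fin n → ℂ,
      ∀ d : MvPolynomial (Fin n) ℂ,
        d ∣ f → d ∣ (∑ i, C (v i) * pderiv i f) → IsUnit d := by
  obtain ⟨v, hv⟩ := exists_direction_forall_prime_dvd_not_dvd hf_sqfree
  refine ⟨v, fun d hdf hdD => ?_⟩
  by_contra hd
  obtain ⟨q, hq, hqd⟩ :=
    WfDvdMonoid.exists_irreducible_factor hd (ne_zero_of_dvd_ne_zero hf_sqfree.ne_zero hdf)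
  rw [← directionalDeriv_apply] at hdD
  exact hv q hq.prime (hqd.trans hdf) (hqd.trans hdD)

/-- For a nonconstant squarefree `f ∈ ℂ[x₁,…,xₙ]`, there is a direction
`v ∈ ℂⁿ` such that `f` and the directional derivative `Σᵢ vᵢ ∂f/∂xᵢ` have no common
nonconstant factor (every common divisor is a unit). -/
theorem exists_direction_coprime_directional_derivative
    (n : ℕ) (f : MvPolynomial (Fin n) ℂ)
    (hf_nonconst : f.totalDegree ≠ 0) (hf_sqfree : Squarefree f) :
    ∃ v : Fin n → ℂ,
      ∀ d : MvPolynomial (Fin n) ℂ,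
        d ∣ f → d ∣ (∑ i, C (v i) * pderiv i f) → IsUnit d :=
  exists_direction_coprime_directional_derivative_general n f hf_sqfree
end

section
/- Let f, g, h ∈ ℂ[x₁,…,xₙ] with f and g coprime, and let a₁,…,aₙ, α₁,…,αₙ ∈ ℂ[x₁,…,xₙ] satisfy g·aᵢ + h·∂f/∂xᵢ = f·αᵢ for all i. Then for all i, j, the polynomial f divides aᵢ·∂f/∂xⱼ − aⱼ·∂f/∂xᵢ. -/
open MvPolynomial

/-- If `f, g` are coprime (every common divisor is a unit) and
`g·aᵢ + h·∂f/∂xᵢ = f·αᵢ` for all `i`, then `f ∣ aᵢ·∂f/∂xⱼ − aⱼ·∂f/∂xᵢ`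
for all `i, j` (Saito: (3) ⇒ (1)). -/
theorem saito_three_implies_one
    (n : ℕ) (f g h : MvPolynomial (Fin n) ℂ)
    (a α : Fin n → MvPolynomial (Fin n) ℂ)
    (hcop : IsRelPrime f g)
    (hrel : ∀ i, g * a i + h * pderiv i f = f * α i) :
    ∀ i j, f ∣ (a i * pderiv j f - a j * pderiv i f) := by
  intro i j
  have key : g * (a i * pderiv j f - a j * pderiv i f)
      = f * (α i * pderiv j f - α j * pderiv i f) := by
    linear_combination pderiv j f * hrel i - pderiv i f * hrel j
  have : f ∣ g * (a i * pderiv j f - a j * pderiv i f) := ⟨_, key⟩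
  exact hcop.dvd_of_dvd_mul_left this
end

section
/- Let f₀, f₁ ∈ ℂ[x₁,…,xₙ] and consider the 1-form ω = 2z dz + df₀ − f₁ dz on ℂ^{n+1} with coordinates (x₁,…,xₙ,z). Then the integrability condition ω ∧ dω = 0 holds if and only if (∂f₀/∂xᵢ)(∂f₁/∂xⱼ) = (∂f₀/∂xⱼ)(∂f₁/∂xᵢ) for all i, j (i.e., df₀ ∧ df₁ = 0). -/
open MvPolynomial

lemma pderiv_comm' {σ R : Type*} [CommRing R] [DecidableEq σ] (i j : σ)
    (p : MvPolynomial σ R) :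
    pderiv i (pderiv j p) = pderiv j (pderiv i p) := by
  induction p using MvPolynomial.induction_on with
  | C a => simp
  | add p q hp hq => simp [hp, hq]
  | mul_X p k h =>
    simp only [pderiv_mul, pderiv_X, map_add, h, Pi.single_apply]
    split_ifs <;> simp <;> ring_nf

lemma pderiv_last_rename {n : ℕ} (q : MvPolynomial (Fin n) ℂ) :
    pderiv (Fin.last n) (rename Fin.castSucc q) = 0 := by
  induction q using MvPolynomial.induction_on with
  | C a => simp
  | add p q hp hq => simp [hp, hq]
  | mul_X p k h =>
    simp [pderiv_mul, h, pderiv_X_of_ne (Fin.castSucc_lt_last k).ne]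

/-- For `ω = 2z dz + df₀ − f₁ dz` (with `f₀, f₁` independent of `z`),
the integrability condition `ω ∧ dω = 0` holds iff `df₀ ∧ df₁ = 0`, i.e.
`(∂f₀/∂xᵢ)(∂f₁/∂xⱼ) = (∂f₀/∂xⱼ)(∂f₁/∂xᵢ)` for all `i, j`. -/
theorem integrability_iff_df0_wedge_df1
    (n : ℕ) (f₀ f₁ : MvPolynomial (Fin n) ℂ)
    (F₀ F₁ : MvPolynomial (Fin (n + 1)) ℂ)
    (hF₀ : F₀ = rename Fin.castSucc f₀) (hF₁ : F₁ = rename Fin.castSucc f₁)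
    (ω : Fin (n + 1) → MvPolynomial (Fin (n + 1)) ℂ)
    (hωx : ∀ i : Fin n, ω i.castSucc = pderiv i.castSucc F₀)
    (hωz : ω (Fin.last n) = 2 * X (Fin.last n) - F₁) :
    (∀ u v w : Fin (n + 1),
        ω u * (pderiv v (ω w) - pderiv w (ω v))
          + ω v * (pderiv w (ω u) - pderiv u (ω w))
          + ω w * (pderiv u (ω v) - pderiv v (ω u)) = 0)
      ↔ (∀ i j : Fin n,
          pderiv i.castSucc F₀ * pderiv j.castSucc F₁
            = pderiv j.castSucc F₀ * pderiv i.castSucc F₁) := by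
  have hD0 : ∀ a b : Fin n,
      pderiv a.castSucc (ω b.castSucc) = pderiv b.castSucc (ω a.castSucc) := by
    intro a b
    rw [hωx a, hωx b]
    exact pderiv_comm' _ _ _
  have hDz : ∀ a : Fin n, pderiv (Fin.last n) (ω a.castSucc) = 0 := by
    intro a
    rw [hωx a, hF₀, pderiv_rename (Fin.castSucc_injective n), pderiv_last_rename]
  have hDzω : ∀ a : Fin n,
      pderiv a.castSucc (ω (Fin.last n)) = - pderiv a.castSucc F₁ := by
    intro a
    rw [hωz]
    have h2 : (2 : MvPolynomial (Fin (n + 1)) ℂ) = C 2 := by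
      simp [map_ofNat]
    rw [h2]
    simp [pderiv_X_of_ne (Fin.castSucc_lt_last a).ne,
      Pi.single_apply, (Fin.castSucc_lt_last a).ne]
  constructor
  · intro H i j
    have h := H i.castSucc j.castSucc (Fin.last n)
    rw [hDzω i, hDzω j, hDz i, hDz j, hD0 i j, hωx i, hωx j] at h
    linear_combination -h
  · intro H u v w
    rcases Fin.eq_castSucc_or_eq_last u with ⟨i, rfl⟩ | rfl
    · rcases Fin.eq_castSucc_or_eq_last v with ⟨j, rfl⟩ | rfl
      · rcases Fin.eq_castSucc_or_eq_last w with ⟨k, rfl⟩ | rfl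
        · rw [hD0 j k, hD0 k i, hD0 i j]; ring
        · rw [hDzω i, hDzω j, hDz i, hDz j, hD0 i j, hωx i, hωx j]
          linear_combination H j i
      · rcases Fin.eq_castSucc_or_eq_last w with ⟨k, rfl⟩ | rfl
        · rw [hDzω i, hDzω k, hDz i, hDz k, hD0 i k, hωx i, hωx k]
          linear_combination H i k
        · ring
    · rcases Fin.eq_castSucc_or_eq_last v with ⟨j, rfl⟩ | rfl
      · rcases Fin.eq_castSucc_or_eq_last w with ⟨k, rfl⟩ | rfl
        · rw [hDzω j, hDzω k, hDz j, hDz k, hD0 j k, hωx j, hωx k]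
          linear_combination H k j
        · ring
      · ring
end
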